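/- arXiv:2502.17373 — 4 statements merged into one kernel-verified Lean document; each statement's English description precedes it below -/
import Mathlib

section
/- Let f : ℝⁿ → ℝ be convex and L-smooth (i.e., differentiable with L-Lipschitz gradient, L > 0), and let x* be a minimizer of f with f* = f(x*). Fix a step size α ∈ (0, 1/L] and a parameter r ≥ 3. Define the Nesterov accelerated gradient iterates by x₋₁ = x₀ (given), y_k = x_k + ((k-1)/(k+r-1))·(x_k − x_{k-1}) and x_{k+1} = y_k − α∇f(y_k) for all k ≥ 0. Then for every k ≥ 0, f(x_k) − f* ≤ (r−1)²·‖x₀ − x*‖² / (2α(k+r−2)²). -/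
/-!
The rate follows from the Su–Boyd–Candès Lyapunov argument. With the weights
`t_k = (k + r - 2) / (r - 1)` and the auxiliary points `v_k = x_{k-1} + t_k (x_k - x_{k-1})`,
the energy `E_k = 2 α t_k² (f x_k - f x⋆) + ‖v_k - x⋆‖²` is nonincreasing: a gradient step with
`α ≤ 1 / L` satisfies `f x_{k+1} ≤ f z + ⟪∇f y_k, y_k - z⟫ - α/2 ‖∇f y_k‖²` for every `z`
(descent lemma plus convexity), and combining this at `z = x_k` and `z = x⋆` with weights
`t_{k+1} - 1` and `1` gives `E_{k+1} ≤ 2 α t_{k+1} (t_{k+1} - 1) (f x_k - f x⋆) + ‖v_k - x⋆‖²`,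
while `t_{k+1} (t_{k+1} - 1) ≤ t_k²` as soon as `r ≥ 3`. Since `t_1 = 1` and `v_0 = x_0`
(`x (0 - 1) = x 0` by truncated subtraction), this gives `E_k ≤ ‖x_0 - x⋆‖²` for `k ≥ 1`;
the case `k = 0` is the descent lemma at the minimizer.
-/

open RealInnerProductSpace

section Smooth

variable {E : Type*} [NormedAddCommGroup E] [InnerProductSpace ℝ E] [CompleteSpace E]
  {f : E → ℝ} {L : ℝ}

theorem le_add_inner_add_half_mul_sq_of_lipschitz_gradient (hf : Differentiable ℝ f)
    (hlip : ∀ a b, ‖gradient f a - gradient f b‖ ≤ L * ‖a - b‖) (a b : E) :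
    f b ≤ f a + ⟪gradient f a, b - a⟫ + L / 2 * ‖b - a‖ ^ 2 := by
  set c := b - a
  let φ : ℝ → ℝ := fun t ↦ f (a + t • c) - t * ⟪gradient f a, c⟫ - L / 2 * t ^ 2 * ‖c‖ ^ 2
  have hφ : ∀ t, HasDerivAt φ
      (⟪gradient f (a + t • c), c⟫ - ⟪gradient f a, c⟫ - L * t * ‖c‖ ^ 2) t := by
    intro t
    have hline : HasDerivAt (fun s : ℝ ↦ a + s • c) c t := by
      simpa using ((hasDerivAt_id t).smul_const c).const_add a
    have hfline := (hf (a + t • c)).hasGradientAt.hasFDerivAt.comp_hasDerivAt t hline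
    refine ((hfline.sub ((hasDerivAt_id t).mul_const ⟪gradient f a, c⟫)).sub
      (((hasDerivAt_pow 2 t).const_mul (L / 2)).mul_const (‖c‖ ^ 2))).congr_deriv ?_
    rw [InnerProductSpace.toDual_apply_apply, Nat.cast_ofNat, Nat.add_one_sub_one, pow_one]
    ring
  have hφ_nonpos : ∀ t, 0 ≤ t →
      ⟪gradient f (a + t • c), c⟫ - ⟪gradient f a, c⟫ - L * t * ‖c‖ ^ 2 ≤ 0 := by
    intro t ht
    rw [← inner_sub_left, sub_nonpos]
    calc ⟪gradient f (a + t • c) - gradient f a, c⟫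
        ≤ ‖gradient f (a + t • c) - gradient f a‖ * ‖c‖ := real_inner_le_norm _ _
      _ ≤ L * ‖t • c‖ * ‖c‖ := by gcongr; simpa using hlip (a + t • c) a
      _ = L * t * ‖c‖ ^ 2 := by rw [norm_smul, Real.norm_of_nonneg ht]; ring
  have hanti : AntitoneOn φ (Set.Ici 0) :=
    antitoneOn_of_hasDerivWithinAt_nonpos (convex_Ici 0)
      (fun t _ ↦ (hφ t).continuousAt.continuousWithinAt) (fun t _ ↦ (hφ t).hasDerivWithinAt)
      (fun t ht ↦ hφ_nonpos t (by rw [interior_Ici] at ht; exact le_of_lt ht))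
  have h10 : φ 1 ≤ φ 0 := hanti Set.self_mem_Ici (Set.mem_Ici.2 zero_le_one) zero_le_one
  simp only [φ, c, one_smul, add_sub_cancel, zero_smul, add_zero] at h10
  linarith

theorem IsLocalMin.sub_le_half_mul_sq_of_lipschitz_gradient {a : E} (ha : IsLocalMin f a)
    (hf : Differentiable ℝ f) (hlip : ∀ a b, ‖gradient f a - gradient f b‖ ≤ L * ‖a - b‖)
    (b : E) : f b - f a ≤ L / 2 * ‖b - a‖ ^ 2 := by
  have hgrad : gradient f a = 0 := by
    rw [gradient, ha.fderiv_eq_zero, map_zero]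
  have := le_add_inner_add_half_mul_sq_of_lipschitz_gradient hf hlip a b
  rw [hgrad, inner_zero_left] at this
  linarith

theorem gradient_step_le (hf : Differentiable ℝ f)
    (hlip : ∀ a b, ‖gradient f a - gradient f b‖ ≤ L * ‖a - b‖) {α : ℝ} (hα : 0 ≤ α)
    (hαL : α * L ≤ 1) {y z : E} (hconv : f y + ⟪gradient f y, z - y⟫ ≤ f z) :
    f (y - α • gradient f y) ≤
      f z + ⟪gradient f y, y - z⟫ - α / 2 * ‖gradient f y‖ ^ 2 := by
  have hdesc := le_add_inner_add_half_mul_sq_of_lipschitz_gradient hf hlip y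
    (y - α • gradient f y)
  set g := gradient f y
  have hinner : ⟪g, y - α • g - y⟫ = -(α * ‖g‖ ^ 2) := by
    rw [sub_sub_cancel_left, inner_neg_right, real_inner_smul_right, real_inner_self_eq_norm_sq]
  have hnorm : ‖y - α • g - y‖ ^ 2 = α ^ 2 * ‖g‖ ^ 2 := by
    rw [sub_sub_cancel_left, norm_neg, norm_smul, Real.norm_of_nonneg hα, mul_pow]
  have hconv' : ⟪g, z - y⟫ = -⟪g, y - z⟫ := by rw [← inner_neg_right, neg_sub]
  rw [hinner, hnorm] at hdesc
  rw [hconv'] at hconv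
  linarith [mul_le_mul_of_nonneg_right hαL (mul_nonneg hα (sq_nonneg ‖g‖))]

end Smooth

section Lyapunov

variable {E : Type*} [NormedAddCommGroup E] [InnerProductSpace ℝ E]

theorem lyapunov_step {f : E → ℝ} {α θ : ℝ} (hα : 0 ≤ α) (hθ : 1 ≤ θ) {x y g xs : E}
    (hstep : ∀ z, f (y - α • g) ≤ f z + ⟪g, y - z⟫ - α / 2 * ‖g‖ ^ 2) :
    2 * α * θ ^ 2 * (f (y - α • g) - f xs) + ‖x + θ • (y - α • g - x) - xs‖ ^ 2 ≤
      2 * α * (θ * (θ - 1)) * (f x - f xs) + ‖x + θ • (y - x) - xs‖ ^ 2 := by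
  set u := x + θ • (y - x) - xs
  have hu : x + θ • (y - α • g - x) - xs = u - (α * θ) • g := by simp only [u]; module
  have hinner : ⟪g, u⟫ = (θ - 1) * ⟪g, y - x⟫ + ⟪g, y - xs⟫ := by
    have : u = (θ - 1) • (y - x) + (y - xs) := by simp only [u]; module
    rw [this, inner_add_right, real_inner_smul_right]
  have hnorm : ‖u - (α * θ) • g‖ ^ 2 =
      ‖u‖ ^ 2 - 2 * (α * θ) * ⟪g, u⟫ + (α * θ) ^ 2 * ‖g‖ ^ 2 := by
    rw [norm_sub_sq_real, real_inner_smul_right, norm_smul, Real.norm_eq_abs, mul_pow, sq_abs,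
      real_inner_comm]
    ring
  have hcomb : θ * (f (y - α • g) - f xs) ≤
      (θ - 1) * (f x - f xs) + ⟪g, u⟫ - θ * (α / 2) * ‖g‖ ^ 2 := by
    rw [hinner]
    nlinarith [mul_le_mul_of_nonneg_left (hstep x) (sub_nonneg.2 hθ), hstep xs]
  rw [hu, hnorm]
  nlinarith [mul_le_mul_of_nonneg_left hcomb (by positivity : 0 ≤ 2 * α * θ)]

end Lyapunov

section Nesterov

noncomputable def nesterovWeight (r : ℝ) (k : ℕ) : ℝ := ((k : ℝ) + r - 2) / (r - 1)

variable {r : ℝ}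

theorem nesterovWeight_one (hr : r ≠ 1) : nesterovWeight r 1 = 1 := by
  rw [nesterovWeight, Nat.cast_one, div_eq_one_iff_eq (sub_ne_zero.2 hr)]
  ring

theorem one_le_nesterovWeight_succ (hr : 1 < r) (k : ℕ) : 1 ≤ nesterovWeight r (k + 1) := by
  rw [nesterovWeight, le_div_iff₀ (by linarith), Nat.cast_succ]
  linarith [k.cast_nonneg (α := ℝ)]

theorem nesterovWeight_succ_mul_momentum (hr : 1 < r) (k : ℕ) :
    nesterovWeight r (k + 1) * (((k : ℝ) - 1) / ((k : ℝ) + r - 1)) = nesterovWeight r k - 1 := by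
  have hk : (k : ℝ) + r - 1 ≠ 0 := by linarith [k.cast_nonneg (α := ℝ)]
  have hr' : r - 1 ≠ 0 := by linarith
  rw [nesterovWeight, nesterovWeight, Nat.cast_succ]
  field_simp
  ring

theorem nesterovWeight_succ_mul_sub_one_le_sq (hr : 3 ≤ r) (k : ℕ) :
    nesterovWeight r (k + 1) * (nesterovWeight r (k + 1) - 1) ≤ nesterovWeight r k ^ 2 := by
  have hr' : 0 < r - 1 := by linarith
  have hkey : ((k : ℝ) + r - 1) * k ≤ ((k : ℝ) + r - 2) ^ 2 := by
    nlinarith [mul_nonneg k.cast_nonneg (by linarith : (0 : ℝ) ≤ r - 3)]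
  calc nesterovWeight r (k + 1) * (nesterovWeight r (k + 1) - 1)
      = ((k : ℝ) + r - 1) * k / (r - 1) ^ 2 := by
        rw [nesterovWeight, Nat.cast_succ]; field_simp; ring
    _ ≤ ((k : ℝ) + r - 2) ^ 2 / (r - 1) ^ 2 := by gcongr
    _ = nesterovWeight r k ^ 2 := by rw [nesterovWeight, div_pow]

variable {E : Type*} [NormedAddCommGroup E] [InnerProductSpace ℝ E]

noncomputable def nesterovEnergy (f : E → ℝ) (xs : E) (α r : ℝ) (x : ℕ → E) (k : ℕ) : ℝ :=
  2 * α * nesterovWeight r k ^ 2 * (f (x k) - f xs) +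
    ‖x (k - 1) + nesterovWeight r k • (x k - x (k - 1)) - xs‖ ^ 2

variable {f : E → ℝ} {xs : E} {α : ℝ} {x y g : ℕ → E}

theorem nesterovEnergy_succ_le (hα : 0 ≤ α) (hr : 1 < r)
    (hy : ∀ k : ℕ, y k = x k + (((k : ℝ) - 1) / ((k : ℝ) + r - 1)) • (x k - x (k - 1)))
    (hx : ∀ k : ℕ, x (k + 1) = y k - α • g k)
    (hstep : ∀ k z, f (y k - α • g k) ≤ f z + ⟪g k, y k - z⟫ - α / 2 * ‖g k‖ ^ 2) (k : ℕ) :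
    nesterovEnergy f xs α r x (k + 1) ≤
      2 * α * (nesterovWeight r (k + 1) * (nesterovWeight r (k + 1) - 1)) * (f (x k) - f xs) +
        ‖x (k - 1) + nesterovWeight r k • (x k - x (k - 1)) - xs‖ ^ 2 := by
  have hv : x k + nesterovWeight r (k + 1) • (y k - x k) =
      x (k - 1) + nesterovWeight r k • (x k - x (k - 1)) := by
    rw [hy k, add_sub_cancel_left, smul_smul, nesterovWeight_succ_mul_momentum hr]
    module
  have h := lyapunov_step (x := x k) (xs := xs) hα (one_le_nesterovWeight_succ hr k) (hstep k)
  rw [hv, ← hx k] at h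
  simpa only [nesterovEnergy, Nat.add_sub_cancel] using h

theorem nesterovEnergy_succ_le_sq (hα : 0 ≤ α) (hr : 3 ≤ r) (hmin : ∀ z, f xs ≤ f z)
    (hy : ∀ k : ℕ, y k = x k + (((k : ℝ) - 1) / ((k : ℝ) + r - 1)) • (x k - x (k - 1)))
    (hx : ∀ k : ℕ, x (k + 1) = y k - α • g k)
    (hstep : ∀ k z, f (y k - α • g k) ≤ f z + ⟪g k, y k - z⟫ - α / 2 * ‖g k‖ ^ 2) (k : ℕ) :
    nesterovEnergy f xs α r x (k + 1) ≤ ‖x 0 - xs‖ ^ 2 := by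
  have hr1 : 1 < r := by linarith
  induction k with
  | zero =>
    simpa [nesterovWeight_one hr1.ne'] using
      nesterovEnergy_succ_le (xs := xs) hα hr1 hy hx hstep 0
  | succ k ih =>
    have hgap : 0 ≤ f (x (k + 1)) - f xs := sub_nonneg.2 (hmin _)
    calc nesterovEnergy f xs α r x (k + 1 + 1)
        ≤ 2 * α * (nesterovWeight r (k + 2) * (nesterovWeight r (k + 2) - 1)) *
            (f (x (k + 1)) - f xs) +
          ‖x k + nesterovWeight r (k + 1) • (x (k + 1) - x k) - xs‖ ^ 2 :=
        nesterovEnergy_succ_le hα hr1 hy hx hstep (k + 1)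
      _ ≤ nesterovEnergy f xs α r x (k + 1) := by
        rw [nesterovEnergy, Nat.add_sub_cancel]
        gcongr
        exact nesterovWeight_succ_mul_sub_one_le_sq hr (k + 1)
      _ ≤ ‖x 0 - xs‖ ^ 2 := ih

theorem sub_le_of_nesterovEnergy_le (hα : 0 < α) (hr : 2 < r) {k : ℕ} {C : ℝ}
    (h : nesterovEnergy f xs α r x k ≤ C) :
    f (x k) - f xs ≤ (r - 1) ^ 2 * C / (2 * α * ((k : ℝ) + r - 2) ^ 2) := by
  have hk : 0 < (k : ℝ) + r - 2 := by linarith [k.cast_nonneg (α := ℝ)]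
  have ht : nesterovWeight r k ^ 2 * (r - 1) ^ 2 = ((k : ℝ) + r - 2) ^ 2 := by
    rw [nesterovWeight, div_pow, div_mul_cancel₀ _ (by nlinarith)]
  rw [le_div_iff₀ (by positivity), ← ht]
  have hv := sq_nonneg ‖x (k - 1) + nesterovWeight r k • (x k - x (k - 1)) - xs‖
  rw [nesterovEnergy] at h
  nlinarith [mul_le_mul_of_nonneg_right h (sq_nonneg (r - 1))]

end Nesterov

/-- Nesterov's accelerated gradient method on an `L`-smooth convex function:
`O(1/k^2)` convergence rate with step size `α ∈ (0, 1/L]` and momentum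
`β_k = (k-1)/(k+r-1)`, `r ≥ 3`.  The initial condition `x₋₁ = x₀` is encoded by
ℕ-subtraction: at `k = 0` the momentum term `x 0 - x (0-1) = 0`. -/
theorem nesterov_convex_rate {n : ℕ} (f : EuclideanSpace ℝ (Fin n) → ℝ)
    (L : ℝ) (hL : 0 < L)
    (hsmooth : ContDiff ℝ 1 f)
    (hlip : ∀ a b, ‖gradient f a - gradient f b‖ ≤ L * ‖a - b‖)
    (hconv : ∀ a b, f a + ⟪gradient f a, b - a⟫ ≤ f b)
    (xs : EuclideanSpace ℝ (Fin n)) (hmin : ∀ z, f xs ≤ f z)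
    (α r : ℝ) (hα : 0 < α) (hαL : α ≤ 1 / L) (hr : 3 ≤ r)
    (x y : ℕ → EuclideanSpace ℝ (Fin n))
    (hy : ∀ k : ℕ, y k = x k + (((k : ℝ) - 1) / ((k : ℝ) + r - 1)) • (x k - x (k - 1)))
    (hx : ∀ k : ℕ, x (k + 1) = y k - α • gradient f (y k)) :
    ∀ k : ℕ, f (x k) - f xs ≤
      (r - 1) ^ 2 * ‖x 0 - xs‖ ^ 2 / (2 * α * ((k : ℝ) + r - 2) ^ 2) := by
  have hf : Differentiable ℝ f := hsmooth.differentiable one_ne_zero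
  have hαL' : α * L ≤ 1 := by rwa [le_div_iff₀ hL] at hαL
  rintro (_ | k)
  · have hC := sq_nonneg ‖x 0 - xs‖
    have hr2 : 0 ≤ (r - 1) ^ 2 - (r - 2) ^ 2 := by nlinarith
    calc f (x 0) - f xs ≤ L / 2 * ‖x 0 - xs‖ ^ 2 :=
          IsLocalMin.sub_le_half_mul_sq_of_lipschitz_gradient
            (Filter.Eventually.of_forall hmin) hf hlip (x 0)
      _ ≤ ‖x 0 - xs‖ ^ 2 / (2 * α) := by
          rw [le_div_iff₀ (by positivity)]
          nlinarith [mul_le_mul_of_nonneg_right hαL' hC]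
      _ ≤ (r - 1) ^ 2 * ‖x 0 - xs‖ ^ 2 / (2 * α * (((0 : ℕ) : ℝ) + r - 2) ^ 2) := by
          rw [Nat.cast_zero, zero_add, div_le_div_iff₀ (by positivity)
            (mul_pos (by positivity) (pow_pos (by linarith) 2))]
          nlinarith [mul_nonneg (mul_nonneg hα.le hC) hr2]
  · exact sub_le_of_nesterovEnergy_le hα (by linarith) <|
      nesterovEnergy_succ_le_sq hα.le hr hmin hy hx
        (fun k _ ↦ gradient_step_le hf hlip hα.le hαL' (hconv _ _)) k
end

section
/- Let f : ℝⁿ → ℝ be convex and L-smooth (L > 0), and let x* be a minimizer of f with f* = f(x*). Define the Nesterov accelerated gradient iterates by x₋₁ = x₀ (given), y_k = x_k + ((k−1)/(k+2))·(x_k − x_{k-1}) and x_{k+1} = y_k − (1/L)∇f(y_k) for all k ≥ 0. Then for every k ≥ 0, f(x_k) − f* ≤ 2L‖x₀ − x*‖² / (k+1)². -/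
open RealInnerProductSpace

/-!
With `t k = (k + 1) / 2` and `z k = x (k - 1) + t k • (x k - x (k - 1))`, the Lyapunov energy
`t k ^ 2 * (f (x k) - f x*) + L / 2 * ‖z k - x*‖ ^ 2` does not increase. A gradient step from `y`
gives `f (x⁺) ≤ f w + ⟪∇f y, y - w⟫ - ‖∇f y‖² / (2L)` for every `w`; adding this inequality at
`w = x k` and `w = x*` with weights `t² - t` and `t` exactly pays for the change of the quadratic
term, because the momentum coefficient `(k - 1) / (k + 2) = (t k - 1) / t (k + 1)` makes
`z (k + 1) = z k - (t (k + 1) / L) • ∇f (y k)`. As `t (k + 1) ^ 2 - t (k + 1) ≤ t k ^ 2` and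
`t 1 = 1`, every energy from the first one on is at most `L / 2 * ‖x 0 - x*‖ ^ 2`.
-/

open scoped Gradient

variable {E : Type*} [NormedAddCommGroup E] [InnerProductSpace ℝ E]

section Gradient

variable [CompleteSpace E] {f : E → ℝ} {L : ℝ}

theorem le_add_inner_gradient_add_sq_of_lipschitz_gradient (hf : Differentiable ℝ f)
    (hlip : ∀ a b, ‖∇ f a - ∇ f b‖ ≤ L * ‖a - b‖) (a b : E) :
    f b ≤ f a + ⟪∇ f a, b - a⟫ + L / 2 * ‖b - a‖ ^ 2 := by
  set d := b - a
  set φ : ℝ → ℝ := fun t => f (a + t • d) - t * ⟪∇ f a, d⟫ - L / 2 * t ^ 2 * ‖d‖ ^ 2 with hφ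
  have hφ' : ∀ t, HasDerivAt φ (⟪∇ f (a + t • d) - ∇ f a, d⟫ - L * t * ‖d‖ ^ 2) t := by
    intro t
    have hline : HasDerivAt (fun t : ℝ => a + t • d) d t := by
      simpa using ((hasDerivAt_id t).smul_const d).const_add a
    have hfline := (hf _).hasGradientAt.hasFDerivAt.comp_hasDerivAt t hline
    refine ((hfline.sub ((hasDerivAt_id t).mul_const ⟪∇ f a, d⟫)).sub
      (((hasDerivAt_pow 2 t).const_mul (L / 2)).mul_const (‖d‖ ^ 2))).congr_deriv ?_
    rw [InnerProductSpace.toDual_apply_apply, inner_sub_left]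
    push_cast
    ring
  obtain ⟨c, hc, hslope⟩ := exists_hasDerivAt_eq_slope φ _ one_pos
    (fun t _ => (hφ' t).continuousAt.continuousWithinAt) (fun t _ => hφ' t)
  have hderiv_le : ⟪∇ f (a + c • d) - ∇ f a, d⟫ ≤ L * c * ‖d‖ ^ 2 := calc
    _ ≤ ‖∇ f (a + c • d) - ∇ f a‖ * ‖d‖ := real_inner_le_norm _ _
    _ ≤ L * ‖c • d‖ * ‖d‖ := by gcongr; simpa using hlip (a + c • d) a
    _ = L * c * ‖d‖ ^ 2 := by rw [norm_smul, Real.norm_of_nonneg hc.1.le]; ring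
  have hφ_le : φ 1 ≤ φ 0 := by
    rw [sub_zero, div_one] at hslope
    linarith
  simp only [hφ, zero_smul, add_zero, one_smul, zero_mul, sub_zero, one_mul, one_pow,
    add_sub_cancel, d] at hφ_le
  linarith

theorem sub_le_half_mul_sq_norm_sub_of_forall_le (hf : Differentiable ℝ f)
    (hlip : ∀ a b, ‖∇ f a - ∇ f b‖ ≤ L * ‖a - b‖) {xs : E} (hmin : ∀ z, f xs ≤ f z) (a : E) :
    f a - f xs ≤ L / 2 * ‖a - xs‖ ^ 2 := by
  have hgrad : ∇ f xs = 0 := by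
    rw [gradient, IsLocalMin.fderiv_eq_zero (Filter.Eventually.of_forall hmin), map_zero]
  have := le_add_inner_gradient_add_sq_of_lipschitz_gradient hf hlip xs a
  rw [hgrad, inner_zero_left, add_zero] at this
  linarith

theorem apply_sub_gradient_le (hL : 0 < L) (hf : Differentiable ℝ f)
    (hlip : ∀ a b, ‖∇ f a - ∇ f b‖ ≤ L * ‖a - b‖) (y : E) :
    f (y - (1 / L) • ∇ f y) ≤ f y - 1 / (2 * L) * ‖∇ f y‖ ^ 2 := by
  have h := le_add_inner_gradient_add_sq_of_lipschitz_gradient hf hlip y (y - (1 / L) • ∇ f y)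
  rw [sub_sub_cancel_left, inner_neg_right, norm_neg, real_inner_smul_right,
    real_inner_self_eq_norm_sq, norm_smul, Real.norm_of_nonneg (by positivity)] at h
  have hcoeff : -(1 / L * ‖∇ f y‖ ^ 2) + L / 2 * (1 / L * ‖∇ f y‖) ^ 2
      = -(1 / (2 * L) * ‖∇ f y‖ ^ 2) := by
    field_simp
    ring
  linarith

theorem apply_sub_gradient_le_add_inner (hL : 0 < L) (hf : Differentiable ℝ f)
    (hlip : ∀ a b, ‖∇ f a - ∇ f b‖ ≤ L * ‖a - b‖)
    (hconv : ∀ a b, f a + ⟪∇ f a, b - a⟫ ≤ f b) (y z : E) :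
    f (y - (1 / L) • ∇ f y) ≤ f z + ⟪∇ f y, y - z⟫ - 1 / (2 * L) * ‖∇ f y‖ ^ 2 := by
  have hz := hconv y z
  rw [← neg_sub y z, inner_neg_right] at hz
  linarith [apply_sub_gradient_le hL hf hlip y]

theorem nesterov_energy_step (hL : 0 < L) (hf : Differentiable ℝ f)
    (hlip : ∀ a b, ‖∇ f a - ∇ f b‖ ≤ L * ‖a - b‖)
    (hconv : ∀ a b, f a + ⟪∇ f a, b - a⟫ ≤ f b) {t : ℝ} (ht : 1 ≤ t) (x y xs : E) :
    t ^ 2 * (f (y - (1 / L) • ∇ f y) - f xs)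
        + L / 2 * ‖t • (y - (1 / L) • ∇ f y) - (t - 1) • x - xs‖ ^ 2
      ≤ (t ^ 2 - t) * (f x - f xs) + L / 2 * ‖t • y - (t - 1) • x - xs‖ ^ 2 := by
  set g := ∇ f y
  set w := t • y - (t - 1) • x - xs
  have hx := apply_sub_gradient_le_add_inner hL hf hlip hconv y x
  have hxs := apply_sub_gradient_le_add_inner hL hf hlip hconv y xs
  have hw_succ : t • (y - (1 / L) • g) - (t - 1) • x - xs = w - (t / L) • g := by
    simp only [w]
    module
  have hinner : ⟪g, w⟫ = (t - 1) * ⟪g, y - x⟫ + ⟪g, y - xs⟫ := by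
    have hw : w = (t - 1) • (y - x) + (y - xs) := by
      simp only [w]
      module
    rw [hw, inner_add_right, real_inner_smul_right]
  have hnorm : L / 2 * ‖w - (t / L) • g‖ ^ 2
      = L / 2 * ‖w‖ ^ 2 - t * ⟪g, w⟫ + t ^ 2 * (1 / (2 * L) * ‖g‖ ^ 2) := by
    rw [norm_sub_sq_real, real_inner_smul_right, norm_smul,
      Real.norm_of_nonneg (by positivity), real_inner_comm]
    field_simp
  rw [hw_succ, hnorm, hinner]
  nlinarith [mul_le_mul_of_nonneg_left hx (by nlinarith : 0 ≤ t ^ 2 - t),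
    mul_le_mul_of_nonneg_left hxs (by linarith : 0 ≤ t)]

end Gradient

namespace Nesterov

noncomputable section

def weight (k : ℕ) : ℝ := (k + 1) / 2

def z (x : ℕ → E) (k : ℕ) : E := weight k • x k - (weight k - 1) • x (k - 1)

def energy (f : E → ℝ) (L : ℝ) (xs : E) (x : ℕ → E) (k : ℕ) : ℝ :=
  weight k ^ 2 * (f (x k) - f xs) + L / 2 * ‖z x k - xs‖ ^ 2

theorem one_le_weight_succ (k : ℕ) : 1 ≤ weight (k + 1) := by
  rw [weight]
  push_cast
  linarith [k.cast_nonneg (α := ℝ)]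

theorem weight_succ_sq_sub_le (k : ℕ) : weight (k + 1) ^ 2 - weight (k + 1) ≤ weight k ^ 2 := by
  rw [weight, weight]
  push_cast
  nlinarith

theorem z_zero (x : ℕ → E) : z x 0 = x 0 := by
  rw [z, weight]
  module

theorem z_succ (x : ℕ → E) (k : ℕ) :
    z x (k + 1) = weight (k + 1) • x (k + 1) - (weight (k + 1) - 1) • x k :=
  rfl

theorem z_eq_of_momentum {x y : ℕ → E}
    (hy : ∀ k : ℕ, y k = x k + (((k : ℝ) - 1) / ((k : ℝ) + 2)) • (x k - x (k - 1))) (k : ℕ) :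
    z x k = weight (k + 1) • y k - (weight (k + 1) - 1) • x k := by
  rw [hy k, z, weight, weight]
  push_cast
  match_scalars <;> field_simp <;> ring

variable [CompleteSpace E] {f : E → ℝ} {L : ℝ}

theorem energy_succ_le (hL : 0 < L) (hf : Differentiable ℝ f)
    (hlip : ∀ a b, ‖∇ f a - ∇ f b‖ ≤ L * ‖a - b‖)
    (hconv : ∀ a b, f a + ⟪∇ f a, b - a⟫ ≤ f b) (xs : E) {x y : ℕ → E}
    (hy : ∀ k : ℕ, y k = x k + (((k : ℝ) - 1) / ((k : ℝ) + 2)) • (x k - x (k - 1)))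
    (hx : ∀ k : ℕ, x (k + 1) = y k - (1 / L) • ∇ f (y k)) (k : ℕ) :
    energy f L xs x (k + 1)
      ≤ (weight (k + 1) ^ 2 - weight (k + 1)) * (f (x k) - f xs) + L / 2 * ‖z x k - xs‖ ^ 2 := by
  rw [energy, z_succ, z_eq_of_momentum hy, hx k]
  exact nesterov_energy_step hL hf hlip hconv (one_le_weight_succ k) (x k) (y k) xs

theorem energy_succ_le_half_mul_sq_norm (hL : 0 < L) (hf : Differentiable ℝ f)
    (hlip : ∀ a b, ‖∇ f a - ∇ f b‖ ≤ L * ‖a - b‖)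
    (hconv : ∀ a b, f a + ⟪∇ f a, b - a⟫ ≤ f b) {xs : E} (hmin : ∀ z, f xs ≤ f z)
    {x y : ℕ → E}
    (hy : ∀ k : ℕ, y k = x k + (((k : ℝ) - 1) / ((k : ℝ) + 2)) • (x k - x (k - 1)))
    (hx : ∀ k : ℕ, x (k + 1) = y k - (1 / L) • ∇ f (y k)) (k : ℕ) :
    energy f L xs x (k + 1) ≤ L / 2 * ‖x 0 - xs‖ ^ 2 := by
  induction k with
  | zero =>
    have h := energy_succ_le hL hf hlip hconv xs hy hx 0
    rw [z_zero, show weight (0 + 1) = 1 by norm_num [weight]] at h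
    linarith
  | succ k ih =>
    have h := energy_succ_le hL hf hlip hconv xs hy hx (k + 1)
    have hweight := mul_le_mul_of_nonneg_right (weight_succ_sq_sub_le (k + 1))
      (sub_nonneg.2 (hmin (x (k + 1))))
    rw [energy] at ih
    linarith

end

end Nesterov

/-- Nesterov's accelerated gradient method with `α = 1/L` and `β_k = (k-1)/(k+2)`:
`f(x_k) - f* ≤ 2L‖x₀ - x*‖²/(k+1)²`.  The initial condition `x₋₁ = x₀` is encoded by
ℕ-subtraction: at `k = 0` the momentum term `x 0 - x (0-1) = 0`. -/
theorem nesterov_convex_rate_special {n : ℕ} (f : EuclideanSpace ℝ (Fin n) → ℝ)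
    (L : ℝ) (hL : 0 < L)
    (hsmooth : ContDiff ℝ 1 f)
    (hlip : ∀ a b, ‖gradient f a - gradient f b‖ ≤ L * ‖a - b‖)
    (hconv : ∀ a b, f a + ⟪gradient f a, b - a⟫ ≤ f b)
    (xs : EuclideanSpace ℝ (Fin n)) (hmin : ∀ z, f xs ≤ f z)
    (x y : ℕ → EuclideanSpace ℝ (Fin n))
    (hy : ∀ k : ℕ, y k = x k + (((k : ℝ) - 1) / ((k : ℝ) + 2)) • (x k - x (k - 1)))
    (hx : ∀ k : ℕ, x (k + 1) = y k - (1 / L) • gradient f (y k)) :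
    ∀ k : ℕ, f (x k) - f xs ≤ 2 * L * ‖x 0 - xs‖ ^ 2 / ((k : ℝ) + 1) ^ 2 := by
  have hf : Differentiable ℝ f := hsmooth.differentiable one_ne_zero
  intro k
  have hgap : 0 ≤ f (x k) - f xs := sub_nonneg.2 (hmin (x k))
  have hbound : Nesterov.weight k ^ 2 * (f (x k) - f xs) ≤ L / 2 * ‖x 0 - xs‖ ^ 2 := by
    cases k with
    | zero =>
      have h := sub_le_half_mul_sq_norm_sub_of_forall_le hf hlip hmin (x 0)
      norm_num [Nesterov.weight]
      linarith
    | succ k =>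
      have h := Nesterov.energy_succ_le_half_mul_sq_norm hL hf hlip hconv hmin hy hx k
      rw [Nesterov.energy] at h
      linarith [show 0 ≤ L / 2 * ‖Nesterov.z x (k + 1) - xs‖ ^ 2 by positivity]
  rw [Nesterov.weight] at hbound
  rw [le_div_iff₀ (by positivity)]
  linarith
end

section
/- Let f : ℝⁿ → ℝ be convex and L-smooth (L > 0), let x* be a minimizer of f with f* = f(x*), fix α ∈ (0, 1/L] and r ≥ 3. Define a₀ = 0 and a_k = (k+r−2)/(r−1) for k ≥ 1, and define the Nesterov iterates by x₋₁ = x₀, y_k = x_k + ((k−1)/(k+r−1))·(x_k − x_{k-1}), x_{k+1} = y_k − α∇f(y_k) for k ≥ 0. Set p_k = (a_k − 1)(x_k − x_{k-1}) for k ≥ 1 and p₀ = 0, and define V_k = ‖p_k + x_k − x*‖² + 2α a_k² (f(x_k) − f*). Then V_{k+1} ≤ V_k for all k ≥ 0; i.e., V is a nonincreasing Lyapunov function along the iterates. -/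
open RealInnerProductSpace Set

/-!
Write `A = a_{k+1}` and `u = A y_k - (A - 1) x_k - x*`; the recursion gives `p_k + x_k = u + x*`
and `p_{k+1} + x_{k+1} = u - α A ∇f(y_k) + x*`. Expanding the square, the cross term
`⟪∇f(y_k), u⟫` is bounded below by the two gradient inequalities at `y_k` (towards `x_k` and
towards `x*`), and the `‖∇f(y_k)‖²` term is absorbed by the descent lemma
`f(x_{k+1}) ≤ f(y_k) - α/2 ‖∇f(y_k)‖²`. What remains is `V_{k+1} ≤ ‖u‖² + 2α A (A - 1) (f(x_k) - f*)`,
and `A (A - 1) ≤ a_k²` is exactly where `r ≥ 3` enters.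
-/

section Step

variable {E : Type*} [NormedAddCommGroup E] [InnerProductSpace ℝ E]

theorem energy_step_le_of_subgradient {f : E → ℝ} {x y x' xs g : E} {α A : ℝ}
    (hα : 0 ≤ α) (hA : 1 ≤ A) (hx' : x' = y - α • g)
    (hgx : f y + ⟪g, x - y⟫ ≤ f x) (hgxs : f y + ⟪g, xs - y⟫ ≤ f xs)
    (hdesc : f x' ≤ f y - α / 2 * ‖g‖ ^ 2) :
    ‖A • x' - (A - 1) • x - xs‖ ^ 2 + 2 * α * A ^ 2 * (f x' - f xs) ≤
      ‖A • y - (A - 1) • x - xs‖ ^ 2 + 2 * α * (A * (A - 1)) * (f x - f xs) := by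
  set u := A • y - (A - 1) • x - xs
  have hsplit : u = (A - 1) • (y - x) + (y - xs) := by module
  have hnext : A • x' - (A - 1) • x - xs = u - (α * A) • g := by rw [hx']; module
  have hcross : (A - 1) * (f y - f x) + (f y - f xs) ≤ ⟪g, u⟫ := by
    rw [hsplit, inner_add_right, real_inner_smul_right, inner_sub_right, inner_sub_right]
    rw [inner_sub_right] at hgx hgxs
    linarith [mul_le_mul_of_nonneg_left hgx (sub_nonneg.2 hA)]
  have hexpand : ‖u - (α * A) • g‖ ^ 2 = ‖u‖ ^ 2 - 2 * (α * A) * ⟪g, u⟫ + (α * A) ^ 2 * ‖g‖ ^ 2 := by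
    rw [norm_sub_sq_real, real_inner_smul_right, norm_smul, real_inner_comm, Real.norm_eq_abs,
      abs_of_nonneg (by positivity), mul_pow]
    ring
  have hαA : 0 ≤ α * A := by positivity
  rw [hnext, hexpand]
  linarith [mul_le_mul_of_nonneg_left hcross hαA,
    mul_le_mul_of_nonneg_left hdesc (by positivity : 0 ≤ α * A ^ 2)]

end Step

section Descent

variable {E : Type*} [NormedAddCommGroup E] [InnerProductSpace ℝ E] [CompleteSpace E]

theorem hasDerivAt_apply_add_smul {f : E → ℝ} (hf : Differentiable ℝ f) (a v : E) (t : ℝ) :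
    HasDerivAt (fun s : ℝ => f (a + s • v)) ⟪gradient f (a + t • v), v⟫ t := by
  have hline : HasDerivAt (fun s : ℝ => a + s • v) v t := by
    simpa using ((hasDerivAt_id t).smul_const v).const_add a
  have h := (hf (a + t • v)).hasGradientAt.hasFDerivAt.comp_hasDerivAt t hline
  simp only [InnerProductSpace.toDual_apply_apply] at h
  exact h

theorem apply_add_le_of_lipschitz_gradient {f : E → ℝ} {L : ℝ} (hf : Differentiable ℝ f)
    (hlip : ∀ a b, ‖gradient f a - gradient f b‖ ≤ L * ‖a - b‖) (a v : E) :
    f (a + v) ≤ f a + ⟪gradient f a, v⟫ + L / 2 * ‖v‖ ^ 2 := by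
  let φ : ℝ → ℝ := fun t => f (a + t • v) - t * ⟪gradient f a, v⟫ - L / 2 * t ^ 2 * ‖v‖ ^ 2
  have hφ : ∀ t, HasDerivAt φ
      (⟪gradient f (a + t • v) - gradient f a, v⟫ - L * t * ‖v‖ ^ 2) t := by
    intro t
    refine (((hasDerivAt_apply_add_smul hf a v t).sub
      ((hasDerivAt_id t).mul_const ⟪gradient f a, v⟫)).sub
      (((hasDerivAt_pow 2 t).const_mul (L / 2)).mul_const (‖v‖ ^ 2))).congr_deriv ?_
    rw [inner_sub_left]
    push_cast
    ring
  have hφ' : ∀ t ∈ Ioi (0 : ℝ), ⟪gradient f (a + t • v) - gradient f a, v⟫ - L * t * ‖v‖ ^ 2 ≤ 0 := by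
    intro t (ht : 0 < t)
    have hgrad : ‖gradient f (a + t • v) - gradient f a‖ ≤ L * (t * ‖v‖) := by
      simpa [norm_smul, abs_of_pos ht] using hlip (a + t • v) a
    nlinarith [real_inner_le_norm (gradient f (a + t • v) - gradient f a) v,
      mul_le_mul_of_nonneg_right hgrad (norm_nonneg v)]
  have hanti : AntitoneOn φ (Ici 0) :=
    antitoneOn_of_hasDerivWithinAt_nonpos (convex_Ici 0)
      (fun t _ => (hφ t).continuousAt.continuousWithinAt)
      (fun t _ => (hφ t).hasDerivWithinAt) (by rwa [interior_Ici])
  have := hanti self_mem_Ici (mem_Ici.2 zero_le_one) zero_le_one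
  simp only [φ, one_smul, zero_smul, add_zero, one_mul, zero_mul, sub_zero, one_pow, mul_one,
    ne_eq, OfNat.ofNat_ne_zero, not_false_eq_true, zero_pow] at this
  linarith

theorem apply_sub_smul_gradient_le {f : E → ℝ} {L α : ℝ} (hf : Differentiable ℝ f)
    (hlip : ∀ a b, ‖gradient f a - gradient f b‖ ≤ L * ‖a - b‖) (hα : 0 ≤ α) (hαL : α * L ≤ 1)
    (y : E) :
    f (y - α • gradient f y) ≤ f y - α / 2 * ‖gradient f y‖ ^ 2 := by
  have h := apply_add_le_of_lipschitz_gradient hf hlip y (-(α • gradient f y))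
  rw [← sub_eq_add_neg, inner_neg_right, real_inner_smul_right, real_inner_self_eq_norm_sq,
    norm_neg, norm_smul, Real.norm_eq_abs, abs_of_nonneg hα] at h
  nlinarith [sq_nonneg ‖gradient f y‖, mul_le_mul_of_nonneg_left hαL hα]

end Descent

section Weights

variable {r : ℝ} {a : ℕ → ℝ}

theorem nesterov_weight_succ (ha : ∀ k : ℕ, 1 ≤ k → a k = ((k : ℝ) + r - 2) / (r - 1))
    (k : ℕ) : a (k + 1) = ((k : ℝ) + r - 1) / (r - 1) := by
  rw [ha (k + 1) (Nat.le_add_left 1 k)]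
  push_cast
  ring

theorem one_le_nesterov_weight_succ (hr : 1 < r)
    (ha : ∀ k : ℕ, 1 ≤ k → a k = ((k : ℝ) + r - 2) / (r - 1)) (k : ℕ) : 1 ≤ a (k + 1) := by
  rw [nesterov_weight_succ ha, le_div_iff₀ (by linarith)]
  linarith [Nat.cast_nonneg (α := ℝ) k]

theorem nesterov_weight_succ_mul_sub_one_le_sq (hr : 3 ≤ r) (ha0 : a 0 = 0)
    (ha : ∀ k : ℕ, 1 ≤ k → a k = ((k : ℝ) + r - 2) / (r - 1)) (k : ℕ) :
    a (k + 1) * (a (k + 1) - 1) ≤ a k ^ 2 := by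
  have hr1 : 0 < r - 1 := by linarith
  rw [nesterov_weight_succ ha]
  rcases Nat.eq_zero_or_pos k with rfl | hk
  · simp [ha0, div_self hr1.ne']
  rw [ha k hk, div_sub_one hr1.ne', div_mul_div_comm, div_pow, ← pow_two,
    div_le_div_iff_of_pos_right (by positivity)]
  have hk' : (0 : ℝ) ≤ k := Nat.cast_nonneg k
  nlinarith

end Weights

theorem nesterov_momentum_eq {E : Type*} [AddCommGroup E] [Module ℝ E] {r : ℝ} (hr : 1 < r)
    {a : ℕ → ℝ} (ha : ∀ k : ℕ, 1 ≤ k → a k = ((k : ℝ) + r - 2) / (r - 1))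
    {x y p : ℕ → E} (hy : ∀ k : ℕ, y k = x k + (((k : ℝ) - 1) / ((k : ℝ) + r - 1)) • (x k - x (k - 1)))
    (hp0 : p 0 = 0) (hp : ∀ k : ℕ, 1 ≤ k → p k = (a k - 1) • (x k - x (k - 1))) (k : ℕ) :
    p k + x k = a (k + 1) • y k - (a (k + 1) - 1) • x k := by
  rcases Nat.eq_zero_or_pos k with rfl | hk
  · rw [hp0, hy 0, Nat.zero_sub, sub_self, smul_zero, add_zero]
    module
  have hcoef : a (k + 1) * (((k : ℝ) - 1) / ((k : ℝ) + r - 1)) = a k - 1 := by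
    have : r - 1 ≠ 0 := by linarith
    have : (k : ℝ) + r - 1 ≠ 0 := by linarith [Nat.cast_nonneg (α := ℝ) k]
    rw [nesterov_weight_succ ha, ha k hk]
    field_simp
    ring
  rw [hp k hk, hy k, smul_add, smul_smul, hcoef]
  module

/-- The Lyapunov function `V_k = ‖p_k + x_k - x*‖² + 2α a_k² (f(x_k) - f*)` is
nonincreasing along the Nesterov iterates in the general convex case. -/
theorem nesterov_lyapunov_nonincreasing {n : ℕ} (f : EuclideanSpace ℝ (Fin n) → ℝ)
    (L : ℝ) (hL : 0 < L)
    (hsmooth : ContDiff ℝ 1 f)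
    (hlip : ∀ a b, ‖gradient f a - gradient f b‖ ≤ L * ‖a - b‖)
    (hconv : ∀ a b, f a + ⟪gradient f a, b - a⟫ ≤ f b)
    (xs : EuclideanSpace ℝ (Fin n)) (hmin : ∀ z, f xs ≤ f z)
    (α r : ℝ) (hα : 0 < α) (hαL : α ≤ 1 / L) (hr : 3 ≤ r)
    (a : ℕ → ℝ) (ha0 : a 0 = 0)
    (ha : ∀ k : ℕ, 1 ≤ k → a k = ((k : ℝ) + r - 2) / (r - 1))
    (x y : ℕ → EuclideanSpace ℝ (Fin n))
    (hy : ∀ k : ℕ, y k = x k + (((k : ℝ) - 1) / ((k : ℝ) + r - 1)) • (x k - x (k - 1)))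
    (hx : ∀ k : ℕ, x (k + 1) = y k - α • gradient f (y k))
    (p : ℕ → EuclideanSpace ℝ (Fin n)) (hp0 : p 0 = 0)
    (hp : ∀ k : ℕ, 1 ≤ k → p k = (a k - 1) • (x k - x (k - 1)))
    (V : ℕ → ℝ)
    (hV : ∀ k : ℕ, V k = ‖p k + x k - xs‖ ^ 2 + 2 * α * (a k) ^ 2 * (f (x k) - f xs)) :
    ∀ k : ℕ, V (k + 1) ≤ V k := by
  intro k
  have hαL' : α * L ≤ 1 := by rwa [le_div_iff₀ hL] at hαL
  have hdesc : f (x (k + 1)) ≤ f (y k) - α / 2 * ‖gradient f (y k)‖ ^ 2 := by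
    rw [hx k]
    exact apply_sub_smul_gradient_le (hsmooth.differentiable one_ne_zero) hlip hα.le hαL' (y k)
  have hnext : p (k + 1) + x (k + 1) = a (k + 1) • x (k + 1) - (a (k + 1) - 1) • x k := by
    rw [hp (k + 1) (Nat.le_add_left 1 k), Nat.add_sub_cancel]
    module
  have hstep := energy_step_le_of_subgradient hα.le (one_le_nesterov_weight_succ (by linarith) ha k)
    (hx k) (hconv (y k) (x k)) (hconv (y k) xs) hdesc
  rw [hV, hV, hnext, nesterov_momentum_eq (by linarith) ha hy hp0 hp k]
  refine hstep.trans ?_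
  gcongr
  · linarith [hmin (x k)]
  · exact nesterov_weight_succ_mul_sub_one_le_sq hr ha0 ha k
end

section
/- Let f : ℝⁿ → ℝ be μ-strongly convex (μ > 0) and L-smooth (L > 0), let x* be the minimizer of f with f* = f(x*), and set κ = L/μ (so κ ≥ 1). Define the Nesterov iterates by x₋₁ = x₀, y_k = x_k + ((√κ − 1)/(√κ + 1))·(x_k − x_{k-1}), x_{k+1} = y_k − (1/L)∇f(y_k) for k ≥ 0, and set v_k = (√κ + 1)y_k − √κ·x_k. Define V_k = f(x_k) − f* + (μ/2)‖v_k − x*‖². Then V_{k+1} ≤ (1 − 1/√κ)·V_k for all k ≥ 0. -/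
/-!
Write `s = √κ`, `g = ∇f(y_k)` and `x_{k+1} = y_k - g / L`. The momentum rule gives
`v_{k+1} = s x_{k+1} - (s - 1) x_k`, so that
`v_{k+1} - x* = (1 - 1/s)(v_k - x*) + (1/s)(y_k - x*) - (s/L) g`.
Expanding `(μ/2)‖v_{k+1} - x*‖²` and using `μ s² = L`, the `‖g‖²` term cancels the gain
`‖g‖² / (2L)` of the descent lemma, and the cross term is `-(1/s)⟪g, y_k - x*⟫ - (1 - 1/s)⟪g, y_k - x_k⟫`.
Strong convexity bounds these two inner products from below by `f(y_k) - f* + (μ/2)‖y_k - x*‖²`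
and `f(y_k) - f(x_k)`, and convexity of `‖·‖²` splits the remaining square with the weights
`1 - 1/s` and `1/s`; everything except `(1 - 1/s) V_k` cancels.
-/

open RealInnerProductSpace

variable {E : Type*} [NormedAddCommGroup E] [InnerProductSpace ℝ E] [CompleteSpace E]
  {f : E → ℝ} {L μ : ℝ}

section StronglyConvex

variable (hsconv : ∀ a b, f a + ⟪gradient f a, b - a⟫ + μ / 2 * ‖b - a‖ ^ 2 ≤ f b)
include hsconv

theorem sub_add_half_mul_sq_le_inner_gradient (a b : E) :
    f a - f b + μ / 2 * ‖a - b‖ ^ 2 ≤ ⟪gradient f a, a - b⟫ := by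
  have h := hsconv a b
  rw [norm_sub_rev, ← neg_sub a b, inner_neg_right] at h
  linarith

theorem le_of_strongConvex_of_lipschitz_gradient [Nontrivial E]
    (hlip : ∀ a b, ‖gradient f a - gradient f b‖ ≤ L * ‖a - b‖) : μ ≤ L := by
  obtain ⟨a, b, hab⟩ := exists_pair_ne E
  have hpos : 0 < ‖a - b‖ ^ 2 := by positivity [sub_ne_zero.mpr hab]
  have hmono : μ * ‖a - b‖ ^ 2 ≤ ⟪gradient f a - gradient f b, a - b⟫ := by
    have h₁ := sub_add_half_mul_sq_le_inner_gradient hsconv a b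
    have h₂ := sub_add_half_mul_sq_le_inner_gradient hsconv b a
    rw [norm_sub_rev, ← neg_sub a b, inner_neg_right] at h₂
    rw [inner_sub_left]
    linarith
  have hcs : ⟪gradient f a - gradient f b, a - b⟫ ≤ L * ‖a - b‖ ^ 2 := by
    calc _ ≤ ‖gradient f a - gradient f b‖ * ‖a - b‖ := real_inner_le_norm _ _
      _ ≤ L * ‖a - b‖ * ‖a - b‖ := by gcongr; exact hlip a b
      _ = L * ‖a - b‖ ^ 2 := by ring
  exact le_of_mul_le_mul_right (hmono.trans hcs) hpos

end StronglyConvex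

section Smooth

variable (hf : Differentiable ℝ f)
  (hlip : ∀ a b, ‖gradient f a - gradient f b‖ ≤ L * ‖a - b‖)
include hf hlip

theorem le_add_inner_gradient_add_half_mul_sq (a b : E) :
    f b ≤ f a + ⟪gradient f a, b - a⟫ + L / 2 * ‖b - a‖ ^ 2 := by
  set φ : ℝ → ℝ := fun t ↦
    f (a + t • (b - a)) - t * ⟪gradient f a, b - a⟫ - L / 2 * t ^ 2 * ‖b - a‖ ^ 2
  have hφ : ∀ t, HasDerivAt φ
      (⟪gradient f (a + t • (b - a)) - gradient f a, b - a⟫ - L * t * ‖b - a‖ ^ 2) t := by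
    intro t
    have hline : HasDerivAt (fun t : ℝ ↦ a + t • (b - a)) (b - a) t := by
      simpa using ((hasDerivAt_id t).smul_const (b - a)).const_add a
    have hfline : HasDerivAt (fun t : ℝ ↦ f (a + t • (b - a)))
        ⟪gradient f (a + t • (b - a)), b - a⟫ t :=
      (hasGradientAt_iff_hasFDerivAt.mp (hf _).hasGradientAt).comp_hasDerivAt t hline
    refine ((hfline.sub ((hasDerivAt_id t).mul_const ⟪gradient f a, b - a⟫)).sub
      (((hasDerivAt_pow 2 t).const_mul (L / 2)).mul_const (‖b - a‖ ^ 2))).congr_deriv ?_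
    rw [inner_sub_left]
    simp only [Nat.cast_ofNat]
    ring
  have hanti : AntitoneOn φ (Set.Ici 0) := by
    refine antitoneOn_of_hasDerivWithinAt_nonpos (convex_Ici 0)
      (fun t _ ↦ (hφ t).continuousAt.continuousWithinAt) (fun t _ ↦ (hφ t).hasDerivWithinAt)
      fun t ht ↦ ?_
    rw [interior_Ici, Set.mem_Ioi] at ht
    have hcs := real_inner_le_norm (gradient f (a + t • (b - a)) - gradient f a) (b - a)
    have hgrad : ‖gradient f (a + t • (b - a)) - gradient f a‖ ≤ L * (t * ‖b - a‖) := by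
      simpa [norm_smul, abs_of_pos ht] using hlip (a + t • (b - a)) a
    nlinarith [mul_le_mul_of_nonneg_right hgrad (norm_nonneg (b - a))]
  have h := hanti (Set.mem_Ici.mpr le_rfl) (Set.mem_Ici.mpr zero_le_one) zero_le_one
  simp only [φ, one_smul, zero_smul, add_zero, add_sub_cancel] at h
  linarith

theorem apply_sub_inv_smul_gradient_le (hL : L ≠ 0) (a : E) :
    f (a - L⁻¹ • gradient f a) ≤ f a - ‖gradient f a‖ ^ 2 / (2 * L) := by
  have h := le_add_inner_gradient_add_half_mul_sq hf hlip a (a - L⁻¹ • gradient f a)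
  rw [sub_sub_cancel_left, inner_neg_right, real_inner_smul_right, real_inner_self_eq_norm_sq,
    norm_neg, norm_smul, mul_pow, Real.norm_eq_abs, sq_abs] at h
  convert h using 1
  field_simp
  ring

end Smooth

theorem smul_momentum_sub_smul {K V : Type*} [Field K] [AddCommGroup V] [Module K V] {s : K}
    (hs : s + 1 ≠ 0) (x x' : V) :
    (s + 1) • (x' + ((s - 1) / (s + 1)) • (x' - x)) - s • x' = s • x' - (s - 1) • x := by
  rw [smul_add, smul_smul, mul_div_cancel₀ _ hs]
  module

theorem nesterov_lyapunov_step (hf : Differentiable ℝ f)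
    (hlip : ∀ a b, ‖gradient f a - gradient f b‖ ≤ L * ‖a - b‖)
    (hsconv : ∀ a b, f a + ⟪gradient f a, b - a⟫ + μ / 2 * ‖b - a‖ ^ 2 ≤ f b)
    (hμ : 0 < μ) {s : ℝ} (hs : 1 ≤ s) (hsL : μ * s ^ 2 = L) (x y xs : E) :
    f (y - L⁻¹ • gradient f y) - f xs
        + μ / 2 * ‖s • (y - L⁻¹ • gradient f y) - (s - 1) • x - xs‖ ^ 2
      ≤ (1 - 1 / s) * (f x - f xs + μ / 2 * ‖(s + 1) • y - s • x - xs‖ ^ 2) := by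
  subst hsL
  have hs0 : 0 < s := one_pos.trans_le hs
  have ht : 0 ≤ 1 / s := by positivity
  have hρ : 0 ≤ 1 - 1 / s := by rw [sub_nonneg, div_le_one hs0]; exact hs
  have hdesc := apply_sub_inv_smul_gradient_le hf hlip (by positivity) y
  have hfar := mul_le_mul_of_nonneg_left (sub_add_half_mul_sq_le_inner_gradient hsconv y xs) ht
  have hnear : (1 - 1 / s) * (f y - f x) ≤ (1 - 1 / s) * ⟪gradient f y, y - x⟫ := by
    have h := sub_add_half_mul_sq_le_inner_gradient hsconv y x
    gcongr
    nlinarith [sq_nonneg ‖y - x‖]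
  have hquad : μ / 2 * ‖s • (y - (μ * s ^ 2)⁻¹ • gradient f y) - (s - 1) • x - xs‖ ^ 2
      = μ / 2 * ‖(y - xs) + (s - 1) • (y - x)‖ ^ 2 - 1 / s * ⟪gradient f y, y - xs⟫
        - (1 - 1 / s) * ⟪gradient f y, y - x⟫ + ‖gradient f y‖ ^ 2 / (2 * (μ * s ^ 2)) := by
    have hsplit : s • (y - (μ * s ^ 2)⁻¹ • gradient f y) - (s - 1) • x - xs
        = ((y - xs) + (s - 1) • (y - x)) - (μ * s)⁻¹ • gradient f y := by
      have hc : s * (μ * s ^ 2)⁻¹ = (μ * s)⁻¹ := by field_simp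
      rw [smul_sub, smul_smul, hc]
      module
    rw [hsplit, norm_sub_sq_real, inner_add_left, real_inner_smul_left, real_inner_smul_right,
      real_inner_smul_right, norm_smul, mul_pow, Real.norm_eq_abs, sq_abs,
      real_inner_comm (gradient f y) (y - xs), real_inner_comm (gradient f y) (y - x)]
    field_simp
    ring
  have hconv : ‖(y - xs) + (s - 1) • (y - x)‖ ^ 2
      ≤ (1 - 1 / s) * ‖(s + 1) • y - s • x - xs‖ ^ 2 + 1 / s * ‖y - xs‖ ^ 2 := by
    have h := (convexOn_univ_norm.pow (fun _ _ ↦ norm_nonneg _) 2).2 (Set.mem_univ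
      ((s + 1) • y - s • x - xs)) (Set.mem_univ (y - xs)) hρ ht (by ring)
    have hw : (1 - 1 / s) • ((s + 1) • y - s • x - xs) + (1 / s) • (y - xs)
        = (y - xs) + (s - 1) • (y - x) := by
      match_scalars <;> field_simp <;> ring
    simpa only [Pi.pow_apply, smul_eq_mul, hw] using h
  nlinarith [mul_le_mul_of_nonneg_left hconv (by positivity : 0 ≤ μ / 2)]

theorem nesterov_strongly_convex_lyapunov_general {n : ℕ} (f : EuclideanSpace ℝ (Fin n) → ℝ)
    (L μ : ℝ) (hL : 0 < L) (hμ : 0 < μ)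
    (hsmooth : ContDiff ℝ 1 f)
    (hlip : ∀ a b, ‖gradient f a - gradient f b‖ ≤ L * ‖a - b‖)
    (hsconv : ∀ a b, f a + ⟪gradient f a, b - a⟫ + μ / 2 * ‖b - a‖ ^ 2 ≤ f b)
    (xs : EuclideanSpace ℝ (Fin n))
    (x y : ℕ → EuclideanSpace ℝ (Fin n))
    (hy : ∀ k : ℕ, y k = x k +
      ((Real.sqrt (L / μ) - 1) / (Real.sqrt (L / μ) + 1)) • (x k - x (k - 1)))
    (hx : ∀ k : ℕ, x (k + 1) = y k - (1 / L) • gradient f (y k))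
    (v : ℕ → EuclideanSpace ℝ (Fin n))
    (hv : ∀ k : ℕ, v k = (Real.sqrt (L / μ) + 1) • y k - Real.sqrt (L / μ) • x k)
    (V : ℕ → ℝ)
    (hV : ∀ k : ℕ, V k = f (x k) - f xs + μ / 2 * ‖v k - xs‖ ^ 2) :
    ∀ k : ℕ, V (k + 1) ≤ (1 - 1 / Real.sqrt (L / μ)) * V k := by
  intro k
  -- `κ ≥ 1` needs two distinct points; in the zero space `V` vanishes.
  rcases subsingleton_or_nontrivial (EuclideanSpace ℝ (Fin n)) with hE | hE
  · have hV0 (m : ℕ) : V m = 0 := by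
      rw [hV, Subsingleton.elim (x m) xs, Subsingleton.elim (v m) xs]
      simp
    simp [hV0]
  set s := Real.sqrt (L / μ)
  have hsL : μ * s ^ 2 = L := by
    rw [Real.sq_sqrt (div_nonneg hL.le hμ.le), mul_div_cancel₀ _ hμ.ne']
  have hs : 1 ≤ s := Real.one_le_sqrt.mpr <|
    (one_le_div hμ).mpr (le_of_strongConvex_of_lipschitz_gradient hsconv hlip)
  have hv_succ : v (k + 1) = s • x (k + 1) - (s - 1) • x k := by
    rw [hv, hy, Nat.add_sub_cancel, smul_momentum_sub_smul (by positivity)]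
  rw [hV, hV, hv_succ, hv, hx, one_div]
  exact nesterov_lyapunov_step (hsmooth.differentiable one_ne_zero) hlip hsconv hμ hs hsL _ _ _

/-- The Lyapunov function `V_k = f(x_k) - f* + (μ/2)‖v_k - x*‖²` contracts at the
accelerated linear rate: `V_{k+1} ≤ (1 - 1/√κ) V_k`, where `κ = L/μ`. -/
theorem nesterov_strongly_convex_lyapunov {n : ℕ} (f : EuclideanSpace ℝ (Fin n) → ℝ)
    (L μ : ℝ) (hL : 0 < L) (hμ : 0 < μ)
    (hsmooth : ContDiff ℝ 1 f)
    (hlip : ∀ a b, ‖gradient f a - gradient f b‖ ≤ L * ‖a - b‖)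
    (hsconv : ∀ a b, f a + ⟪gradient f a, b - a⟫ + μ / 2 * ‖b - a‖ ^ 2 ≤ f b)
    (xs : EuclideanSpace ℝ (Fin n)) (hmin : ∀ z, f xs ≤ f z)
    (x y : ℕ → EuclideanSpace ℝ (Fin n))
    (hy : ∀ k : ℕ, y k = x k +
      ((Real.sqrt (L / μ) - 1) / (Real.sqrt (L / μ) + 1)) • (x k - x (k - 1)))
    (hx : ∀ k : ℕ, x (k + 1) = y k - (1 / L) • gradient f (y k))
    (v : ℕ → EuclideanSpace ℝ (Fin n))
    (hv : ∀ k : ℕ, v k = (Real.sqrt (L / μ) + 1) • y k - Real.sqrt (L / μ) • x k)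
    (V : ℕ → ℝ)
    (hV : ∀ k : ℕ, V k = f (x k) - f xs + μ / 2 * ‖v k - xs‖ ^ 2) :
    ∀ k : ℕ, V (k + 1) ≤ (1 - 1 / Real.sqrt (L / μ)) * V k :=
  nesterov_strongly_convex_lyapunov_general f L μ hL hμ hsmooth hlip hsconv xs x y hy hx v hv V hV
end
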